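/- If g is a real function (i.e., g(conj(z)) = conj(g(z)) for all z), then a rational function r in barycentric form r(s) = (Σ_{j=1}^d g(σ_j) ξ_j/(s−σ_j)) / (Σ_{i=1}^d ξ_i/(s−σ_i)) whose support points σ_j form a set closed under complex conjugation, and whose weights satisfy ξ_j' = conj(ξ_j) whenever σ_j' = conj(σ_j), is itself a real function: r(conj(s)) = conj(r(s)) for all s where r is defined. -/

import Mathlib

/-! Conjugation permutes the terms of both barycentric sums: the term of `(σ (c j), ξ (c j))` at
`conj s` is the conjugate of the term of `(σ j, ξ j)` at `s`, and since `g` is real the numerator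
weights `g (σ j) * ξ j` inherit the symmetry of the `ξ j`. Hence numerator and denominator at
`conj s` are the conjugates of those at `s`. -/

theorem Equiv.Perm.sum_eq_star_sum {ι R : Type*} [Fintype ι] [AddCommMonoid R] [StarAddMonoid R]
    {f g : ι → R} (c : Equiv.Perm ι) (h : ∀ j, g (c j) = star (f j)) :
    ∑ j, g j = star (∑ j, f j) := by
  rw [star_sum, ← Equiv.sum_comp c]
  exact Finset.sum_congr rfl fun j _ => h j

theorem sum_div_sub_star_eq_star_sum {ι K : Type*} [Fintype ι] [Field K] [StarRing K]
    {σ w : ι → K} (c : Equiv.Perm ι) (hσ : ∀ j, σ (c j) = star (σ j))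
    (hw : ∀ j, w (c j) = star (w j)) (z : K) :
    ∑ j, w j / (star z - σ j) = star (∑ j, w j / (z - σ j)) :=
  c.sum_eq_star_sum fun j => by rw [hσ, hw, star_div₀, star_sub]

theorem barycentric_real {d : ℕ} (g : ℂ → ℂ) (hg : ∀ z, g (star z) = star (g z))
    (σ ξ : Fin d → ℂ)
    (c : Equiv.Perm (Fin d)) (hc : ∀ j, σ (c j) = star (σ j))
    (hw : ∀ j, ξ (c j) = star (ξ j))
    (r : ℂ → ℂ)
    (hr : ∀ z, r z = (∑ j, g (σ j) * ξ j / (z - σ j)) / (∑ i, ξ i / (z - σ i)))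
    (s : ℂ) :
    r (star s) = star (r s) := by
  have hgw : ∀ j, g (σ (c j)) * ξ (c j) = star (g (σ j) * ξ j) := fun j => by
    rw [hc, hw, hg, star_mul']
  rw [hr, hr, star_div₀, sum_div_sub_star_eq_star_sum c hc hgw,
    sum_div_sub_star_eq_star_sum c hc hw]
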